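/- Let f : V → W be a ℂ-linear map between two finite exhaustively and decreasingly filtered finite-dimensional complex vector spaces (V,F) and (W,G) with f(F p) ⊆ G p for all p. Then f is strictly compatible with the filtrations (meaning f(F p) = (range f) ∩ G p for every integer p) if and only if the cokernel of the induced map ξ(f) : ξ(V,F) → ξ(W,G) has no λ-torsion, i.e. if and only if for every y ∈ ξ(W,G) with λ·y ∈ (f ⊗ id)(ξ(V,F)) one has y ∈ (f ⊗ id)(ξ(V,F)). (This is the paper's assertion that f is strictly compatible with the filtrations iff ξ(f) is a morphism of vector bundles on 𝔸¹.) -/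

import Mathlib

noncomputable section
open Polynomial LaurentPolynomial TensorProduct

set_option maxSynthPendingDepth 3

/-- `ℂ[λ]` (that is, `Polynomial ℂ`) acts on `ℂ[λ,λ⁻¹]` (that is, `LaurentPolynomial ℂ`)
compatibly with the `ℂ`-actions. -/
instance : IsScalarTower ℂ (Polynomial ℂ) (LaurentPolynomial ℂ) :=
  IsScalarTower.of_algebraMap_eq fun c => by
    simp [LaurentPolynomial.algebraMap_eq_toLaurent, Polynomial.algebraMap_eq]

/-- The Rees module `ξ(V,F)` of a filtered complex vector space `(V,F)`: the `ℂ[λ]`-submodule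
of `V ⊗_ℂ ℂ[λ,λ⁻¹]` (realized here as `ℂ[λ,λ⁻¹] ⊗_ℂ V`) generated by the elements
`v ⊗ λ^{-p} = T (-p) ⊗ v` with `p ∈ ℤ` and `v ∈ F p`. -/
def ReesModule (V : Type*) [AddCommGroup V] [Module ℂ V] (F : ℤ → Submodule ℂ V) :
    Submodule (Polynomial ℂ) ((LaurentPolynomial ℂ) ⊗[ℂ] V) :=
  Submodule.span (Polynomial ℂ)
    {x | ∃ (p : ℤ) (v : V), v ∈ F p ∧ x = (LaurentPolynomial.T (-p)) ⊗ₜ[ℂ] v}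


/-! Identify `ℂ[λ,λ⁻¹] ⊗ V` with the finitely supported sequences `ℤ →₀ V`. Then `ξ(V,F)`
consists of the sequences whose `n`-th term lies in `F (-n)`, multiplication by `λ` shifts the
index by one, and `f ⊗ id` maps `ξ(V,F)` onto the Rees module of the image filtration `f (F p)`.
If `f` is strict and `λ y` lies in that image, each term `y n` lies in
`range f ∩ G (-n) = f (F (-n))`. Conversely, for `w ∈ range f ∩ G p`, exhaustiveness of `F` puts
`λ ^ N • (λ ^ (-p) ⊗ w)` in the image for large `N`, and removing the factors `λ` one at a time
shows `w ∈ f (F p)`. -/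

namespace LaurentPolynomial

variable {R : Type*} [CommSemiring R] {V : Type*} [AddCommMonoid V] [Module R V]

variable (R V) in
def tensorCoeff : R[T;T⁻¹] ⊗[R] V ≃ₗ[R] (ℤ →₀ V) :=
  (LinearEquiv.rTensor V (AddMonoidAlgebra.coeffLinearEquiv R)).trans
    (TensorProduct.finsuppScalarLeft R V ℤ)

theorem tensorCoeff_tmul (q : R[T;T⁻¹]) (v : V) (n : ℤ) :
    tensorCoeff R V (q ⊗ₜ v) n = q.coeff n • v :=
  TensorProduct.finsuppScalarLeft_apply_tmul_apply _ _ _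

theorem tensorCoeff_T_tmul (n : ℤ) (v : V) :
    tensorCoeff R V (T n ⊗ₜ v) = Finsupp.single n v := by
  ext m
  simp [tensorCoeff_tmul, Finsupp.single_apply]

theorem sum_T_tmul_tensorCoeff (x : R[T;T⁻¹] ⊗[R] V) :
    ((tensorCoeff R V x).sum fun n v => T n ⊗ₜ v) = x := by
  apply (tensorCoeff R V).injective
  simp only [map_finsuppSum, tensorCoeff_T_tmul, Finsupp.sum_single]

theorem tensorCoeff_X_smul (x : R[T;T⁻¹] ⊗[R] V) (n : ℤ) :
    tensorCoeff R V ((Polynomial.X : R[X]) • x) n = tensorCoeff R V x (n - 1) := by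
  induction x using TensorProduct.induction_on with
  | zero => simp
  | tmul q v =>
    rw [TensorProduct.smul_tmul', tensorCoeff_tmul, tensorCoeff_tmul, Algebra.smul_def,
      algebraMap_eq_toLaurent, Polynomial.toLaurent_X, T, AddMonoidAlgebra.coeff_single_mul_apply,
      one_mul, neg_add_eq_sub]
  | add x y hx hy => simp only [smul_add, map_add, Finsupp.add_apply, hx, hy]

theorem X_pow_smul_T_tmul (k : ℕ) (n : ℤ) (v : V) :
    (Polynomial.X ^ k : R[X]) • ((T n : R[T;T⁻¹]) ⊗ₜ[R] v) = (T (n + k) : R[T;T⁻¹]) ⊗ₜ v := by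
  rw [TensorProduct.smul_tmul', Algebra.smul_def, algebraMap_eq_toLaurent,
    Polynomial.toLaurent_X_pow, ← T_add, add_comm]

end LaurentPolynomial

theorem Submodule.mem_of_pow_smul_mem {R M : Type*} [Semiring R] [AddCommMonoid M] [Module R M]
    {P Q : Submodule R M} {a : R} (h : ∀ y ∈ P, a • y ∈ Q → y ∈ Q) {x : M} (hx : x ∈ P)
    (k : ℕ) (hk : a ^ k • x ∈ Q) : x ∈ Q := by
  induction k with
  | zero => simpa using hk
  | succ k ih =>
    rw [pow_succ', mul_smul] at hk
    exact ih (h _ (P.smul_mem _ hx) hk)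

open LaurentPolynomial

section ReesModule

variable {V W : Type*} [AddCommGroup V] [Module ℂ V] [AddCommGroup W] [Module ℂ W]
  {F : ℤ → Submodule ℂ V}

theorem T_tmul_mem_reesModule {p : ℤ} {v : V} (hv : v ∈ F p) :
    (T (-p) : ℂ[T;T⁻¹]) ⊗ₜ v ∈ ReesModule V F :=
  Submodule.subset_span ⟨p, v, hv, rfl⟩

theorem tensorCoeff_smul_mem_of_antitone (hF : Antitone F) {x : ℂ[T;T⁻¹] ⊗[ℂ] V}
    (hx : ∀ n, tensorCoeff ℂ V x n ∈ F (-n)) (c : ℂ[X]) (n : ℤ) :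
    tensorCoeff ℂ V (c • x) n ∈ F (-n) := by
  induction c using Polynomial.induction_on generalizing n with
  | C a =>
    rw [← Polynomial.algebraMap_eq, algebraMap_smul, map_smul]
    exact (F _).smul_mem a (hx n)
  | add p q hp hq => rw [add_smul, map_add]; exact (F _).add_mem (hp n) (hq n)
  | monomial k a ih =>
    rw [pow_succ, ← mul_assoc, mul_comm, mul_smul, tensorCoeff_X_smul]
    exact hF (by omega) (ih (n - 1))

theorem mem_reesModule_iff (hF : Antitone F) (x : ℂ[T;T⁻¹] ⊗[ℂ] V) :
    x ∈ ReesModule V F ↔ ∀ n, tensorCoeff ℂ V x n ∈ F (-n) := by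
  constructor
  · intro hx
    induction hx using Submodule.span_induction with
    | mem x hx =>
      obtain ⟨p, v, hv, rfl⟩ := hx
      intro n
      rw [tensorCoeff_T_tmul, Finsupp.single_apply]
      split_ifs with h
      · exact hF (by omega) hv
      · exact (F _).zero_mem
    | zero => simp
    | add x y _ _ hx hy => intro n; rw [map_add]; exact (F _).add_mem (hx n) (hy n)
    | smul c x _ hx => exact tensorCoeff_smul_mem_of_antitone hF hx c
  · intro hx
    rw [← sum_T_tmul_tensorCoeff x]
    refine Submodule.finsuppSum_mem _ _ _ _ fun n _ => ?_
    simpa using T_tmul_mem_reesModule (hx n)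

theorem map_baseChange_reesModule (f : V →ₗ[ℂ] W) :
    (ReesModule V F).map ((f.baseChange ℂ[T;T⁻¹]).restrictScalars ℂ[X]) =
      ReesModule W fun p => (F p).map f := by
  rw [ReesModule, Submodule.map_span]
  congr 1
  ext y
  simp only [Set.mem_image, Set.mem_ofPred_eq, Submodule.mem_map]
  constructor
  · rintro ⟨_, ⟨p, v, hv, rfl⟩, rfl⟩
    exact ⟨p, f v, ⟨v, hv, rfl⟩, rfl⟩
  · rintro ⟨p, _, ⟨v, hv, rfl⟩, rfl⟩
    exact ⟨_, ⟨p, v, hv, rfl⟩, rfl⟩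

end ReesModule

theorem reesModule_strict_iff_no_lambda_torsion_general
    (V : Type*) [AddCommGroup V] [Module ℂ V]
    (W : Type*) [AddCommGroup W] [Module ℂ W]
    (F : ℤ → Submodule ℂ V) (G : ℤ → Submodule ℂ W)
    (hFdec : ∀ p : ℤ, F (p + 1) ≤ F p)
    (hFfin : ∃ a b : ℤ, a ≤ b ∧ (∀ p ≤ a, F p = ⊤) ∧ (∀ p, b ≤ p → F p = ⊥))
    (hGdec : ∀ p : ℤ, G (p + 1) ≤ G p)
    (f : V →ₗ[ℂ] W) (hf : ∀ p : ℤ, (F p).map f ≤ G p) :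
    (∀ p : ℤ, (F p).map f = LinearMap.range f ⊓ G p) ↔
      (∀ y ∈ ReesModule W G,
        (Polynomial.X : Polynomial ℂ) • y ∈
            Submodule.map ((f.baseChange (LaurentPolynomial ℂ)).restrictScalars
              (Polynomial ℂ)) (ReesModule V F) →
          y ∈ Submodule.map ((f.baseChange (LaurentPolynomial ℂ)).restrictScalars
              (Polynomial ℂ)) (ReesModule V F)) := by
  have hG : Antitone G := antitone_int_of_succ_le hGdec
  have hfF : Antitone fun p => (F p).map f :=
    fun _ _ h => Submodule.map_mono (antitone_int_of_succ_le hFdec h)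
  rw [map_baseChange_reesModule]
  constructor
  · intro hstrict y hy hXy
    rw [mem_reesModule_iff hG] at hy
    rw [mem_reesModule_iff hfF] at hXy ⊢
    intro n
    have hyn := hXy (n + 1)
    rw [tensorCoeff_X_smul, add_sub_cancel_right] at hyn
    rw [hstrict]
    exact ⟨LinearMap.map_le_range hyn, hy n⟩
  · intro htorsionFree p
    refine le_antisymm (le_inf LinearMap.map_le_range (hf p)) ?_
    rintro w ⟨hwf, hwG⟩
    obtain ⟨a, -, -, ha, -⟩ := hFfin
    have hN : (X ^ (p - a).toNat : ℂ[X]) • ((T (-p) : ℂ[T;T⁻¹]) ⊗ₜ w) ∈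
        ReesModule W fun p => (F p).map f := by
      rw [X_pow_smul_T_tmul, show -p + (p - a).toNat = -(p - (p - a).toNat) by ring]
      refine T_tmul_mem_reesModule ?_
      rwa [ha _ (by omega), Submodule.map_top]
    have hw := Submodule.mem_of_pow_smul_mem htorsionFree (T_tmul_mem_reesModule hwG) _ hN
    simpa [tensorCoeff_T_tmul] using (mem_reesModule_iff hfF _).1 hw (-p)

/-- Let `f : (V,F) → (W,G)` be a `ℂ`-linear map of finite
exhaustively and decreasingly filtered finite-dimensional complex vector spaces with
`f (F p) ⊆ G p` for all `p`.  Then `f` is strictly compatible with the filtrations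
(`f (F p) = range f ∩ G p` for all `p`) if and only if the cokernel of
`ξ(f) : ξ(V,F) → ξ(W,G)` has no `λ`-torsion: for every `y ∈ ξ(W,G)`, if
`λ • y ∈ (f ⊗ id) (ξ(V,F))` then `y ∈ (f ⊗ id) (ξ(V,F))`. -/
theorem reesModule_strict_iff_no_lambda_torsion
    (V : Type*) [AddCommGroup V] [Module ℂ V] [FiniteDimensional ℂ V]
    (W : Type*) [AddCommGroup W] [Module ℂ W] [FiniteDimensional ℂ W]
    (F : ℤ → Submodule ℂ V) (G : ℤ → Submodule ℂ W)
    (hFdec : ∀ p : ℤ, F (p + 1) ≤ F p)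
    (hFfin : ∃ a b : ℤ, a ≤ b ∧ (∀ p ≤ a, F p = ⊤) ∧ (∀ p, b ≤ p → F p = ⊥))
    (hGdec : ∀ p : ℤ, G (p + 1) ≤ G p)
    (hGfin : ∃ a b : ℤ, a ≤ b ∧ (∀ p ≤ a, G p = ⊤) ∧ (∀ p, b ≤ p → G p = ⊥))
    (f : V →ₗ[ℂ] W) (hf : ∀ p : ℤ, (F p).map f ≤ G p) :
    (∀ p : ℤ, (F p).map f = LinearMap.range f ⊓ G p) ↔
      (∀ y ∈ ReesModule W G,
        (Polynomial.X : Polynomial ℂ) • y ∈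
            Submodule.map ((f.baseChange (LaurentPolynomial ℂ)).restrictScalars
              (Polynomial ℂ)) (ReesModule V F) →
          y ∈ Submodule.map ((f.baseChange (LaurentPolynomial ℂ)).restrictScalars
              (Polynomial ℂ)) (ReesModule V F)) :=
  reesModule_strict_iff_no_lambda_torsion_general V W F G hFdec hFfin hGdec f hf
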